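/- arXiv:2005.02918 — 2 statements merged into one kernel-verified Lean document; each statement's English description precedes it below -/
import Mathlib

section
/- Let E = EuclideanSpace ℝ (Fin m) with m ≥ 2, let x, y ∈ E with x ≠ y, and let z ∈ openSegment ℝ x y. Then: (i) every continuous curve γ : [0,1] → E with γ(0) = x, γ(1) = y whose image avoids z satisfies eVariationOn γ [0,1] > dist x y (strict inequality in [0,∞]); and (ii) for every ε > 0 there exists such a curve with eVariationOn γ [0,1] < dist x y + ε. Consequently the punctured space E ∖ {z} is not geodesically convex: x and y are not joined in E ∖ {z} by any curve of minimal length, although the infimum of lengths equals dist x y. -/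
open Real Set
open scoped ENNReal

/-! A curve from `x` to `y` whose length is at most `dist x y` satisfies
`dist x (γ t) + dist (γ t) y = dist x y` at every time, so by the intermediate value theorem and
strict convexity it passes through every point of `[x, y]`; hence a curve avoiding `z` is
strictly longer. Conversely, a tent over `[x, y]` of small height in a direction independent of
`y - x` avoids the segment's interior and is `(dist x y + height)`-Lipschitz on `[0, 1]`. -/

theorem eVariationOn.edist_add_edist_le {α E : Type*} [LinearOrder α] [PseudoEMetricSpace E]
    (f : α → E) {a b t : α} (ht : t ∈ Icc a b) :
    edist (f a) (f t) + edist (f t) (f b) ≤ eVariationOn f (Icc a b) := by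
  have ha : a ∈ Icc a b := left_mem_Icc.2 (ht.1.trans ht.2)
  have hb : b ∈ Icc a b := right_mem_Icc.2 (ht.1.trans ht.2)
  calc edist (f a) (f t) + edist (f t) (f b)
      ≤ eVariationOn f (Icc a b ∩ Icc a t) + eVariationOn f (Icc a b ∩ Icc t b) :=
        add_le_add (eVariationOn.edist_le f ⟨ha, le_rfl, ht.1⟩ ⟨ht, ht.1, le_rfl⟩)
          (eVariationOn.edist_le f ⟨ht, le_rfl, ht.2⟩ ⟨hb, ht.2, le_rfl⟩)
    _ = eVariationOn f (Icc a b) := by rw [eVariationOn.Icc_add_Icc f ht.1 ht.2 ht, inter_self]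

theorem LipschitzOnWith.eVariationOn_Icc_le {E : Type*} [PseudoEMetricSpace E] {f : ℝ → E}
    {C : NNReal} {a b : ℝ} (hf : LipschitzOnWith C f (Icc a b)) :
    eVariationOn f (Icc a b) ≤ C * ENNReal.ofReal (b - a) := by
  simpa using hf.comp_eVariationOn_le (g := id) (mapsTo_id _)

section StrictConvex

variable {E : Type*} [NormedAddCommGroup E] [NormedSpace ℝ E] [StrictConvexSpace ℝ E]
  {f : ℝ → E} {a b : ℝ}

theorem segment_subset_image_of_eVariationOn_le (hab : a ≤ b) (hf : ContinuousOn f (Icc a b))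
    (hlen : eVariationOn f (Icc a b) ≤ edist (f a) (f b)) :
    segment ℝ (f a) (f b) ⊆ f '' Icc a b := by
  rw [segment_eq_image_lineMap]
  rintro _ ⟨c, hc, rfl⟩
  have hsplit : ∀ t ∈ Icc a b, dist (f a) (f t) + dist (f t) (f b) = dist (f a) (f b) := by
    intro t ht
    refine le_antisymm ?_ (dist_triangle _ _ _)
    have := (eVariationOn.edist_add_edist_le f ht).trans hlen
    rwa [edist_dist, edist_dist, edist_dist, ← ENNReal.ofReal_add dist_nonneg dist_nonneg,
      ENNReal.ofReal_le_ofReal_iff dist_nonneg] at this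
  have hdist : ContinuousOn (fun t ↦ dist (f a) (f t)) (Icc a b) :=
    (continuous_const.dist continuous_id).comp_continuousOn hf
  obtain ⟨t, ht, hct⟩ : c * dist (f a) (f b) ∈ (fun t ↦ dist (f a) (f t)) '' Icc a b := by
    refine intermediate_value_Icc hab hdist ⟨?_, ?_⟩
    · simpa using mul_nonneg hc.1 dist_nonneg
    · simpa using mul_le_of_le_one_left dist_nonneg hc.2
  refine ⟨t, ht, eq_lineMap_of_dist_eq_mul_of_dist_eq_mul hct ?_⟩
  linarith [hsplit t ht]

theorem edist_lt_eVariationOn_of_mem_segment_of_notMem_image (hab : a ≤ b)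
    (hf : ContinuousOn f (Icc a b)) {z : E} (hz : z ∈ segment ℝ (f a) (f b))
    (hzf : z ∉ f '' Icc a b) : edist (f a) (f b) < eVariationOn f (Icc a b) :=
  lt_of_not_ge fun hlen ↦ hzf (segment_subset_image_of_eVariationOn_le hab hf hlen hz)

end StrictConvex

section Tent

variable {E : Type*} [NormedAddCommGroup E] [NormedSpace ℝ E]

def tentPath (x y v : E) (t : ℝ) : E := AffineMap.lineMap x y t + min t (1 - t) • v

@[simp] theorem tentPath_zero (x y v : E) : tentPath x y v 0 = x := by simp [tentPath]

@[simp] theorem tentPath_one (x y v : E) : tentPath x y v 1 = y := by simp [tentPath]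

theorem lipschitzWith_tentPath (x y v : E) :
    LipschitzWith (nndist x y + ‖v‖₊) (tentPath x y v) := by
  have hmin : LipschitzWith 1 fun t : ℝ ↦ min t (1 - t) := by
    simpa using LipschitzWith.id.min ((LipschitzWith.const 1).sub LipschitzWith.id)
  have hheight : LipschitzWith ‖v‖₊ fun t : ℝ ↦ min t (1 - t) • v := by
    simpa [Function.comp_def, AffineMap.lineMap_apply_module] using
      (lipschitzWith_lineMap (0 : E) v).comp hmin
  exact (lipschitzWith_lineMap x y).add hheight

theorem eVariationOn_tentPath_le (x y v : E) :
    eVariationOn (tentPath x y v) (Icc 0 1) ≤ ENNReal.ofReal (dist x y + ‖v‖) := by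
  refine ((lipschitzWith_tentPath x y v).lipschitzOnWith.eVariationOn_Icc_le).trans_eq ?_
  rw [sub_zero, ENNReal.ofReal_one, mul_one, ← ENNReal.ofReal_coe_nnreal, NNReal.coe_add,
    coe_nndist, coe_nnnorm]

theorem tentPath_ne_of_mem_openSegment {x y v z : E} (hv : LinearIndependent ℝ ![y - x, v])
    (hz : z ∈ openSegment ℝ x y) (t : ℝ) : tentPath x y v t ≠ z := by
  rw [openSegment_eq_image_lineMap] at hz
  obtain ⟨c, hc, rfl⟩ := hz
  intro h
  have hcomb : (t - c) • (y - x) + min t (1 - t) • v = 0 := by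
    rw [← sub_eq_zero.2 h, tentPath]
    simp only [AffineMap.lineMap_apply_module]
    module
  obtain ⟨htc, hmin⟩ := LinearIndependent.pair_iff.1 hv _ _ hcomb
  obtain rfl : t = c := sub_eq_zero.1 htc
  exact (lt_min hc.1 (sub_pos.2 hc.2)).ne' hmin

theorem exists_linearIndependent_pair_norm_lt (hE : 1 < Module.finrank ℝ E) {w : E} (hw : w ≠ 0)
    {ε : ℝ} (hε : 0 < ε) : ∃ v : E, LinearIndependent ℝ ![w, v] ∧ ‖v‖ < ε := by
  obtain ⟨u, hu⟩ := exists_linearIndependent_pair_of_one_lt_finrank hE hw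
  have hu0 : u ≠ 0 := by simpa using hu.ne_zero 1
  set c : ℝ := ε / 2 / ‖u‖
  have hc : 0 < c := by positivity
  refine ⟨c • u, LinearIndependent.pair_iff.2 fun s t hst ↦ ?_, ?_⟩
  · obtain ⟨hs, htc⟩ := LinearIndependent.pair_iff.1 hu s (t * c) (by rwa [mul_smul])
    exact ⟨hs, (mul_eq_zero.1 htc).resolve_right hc.ne'⟩
  · rw [norm_smul, Real.norm_of_nonneg hc.le, div_mul_cancel₀ _ (norm_ne_zero_iff.2 hu0)]
    exact half_lt_self hε

theorem exists_eVariationOn_lt_of_mem_openSegment (hE : 1 < Module.finrank ℝ E) {x y z : E}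
    (hxy : x ≠ y) (hz : z ∈ openSegment ℝ x y) {ε : ℝ} (hε : 0 < ε) :
    ∃ γ : ℝ → E, ContinuousOn γ (Icc 0 1) ∧ γ 0 = x ∧ γ 1 = y ∧ z ∉ γ '' Icc 0 1 ∧
      eVariationOn γ (Icc 0 1) < ENNReal.ofReal (dist x y + ε) := by
  obtain ⟨v, hv, hvε⟩ := exists_linearIndependent_pair_norm_lt hE (sub_ne_zero.2 hxy.symm) hε
  refine ⟨tentPath x y v, (lipschitzWith_tentPath x y v).continuous.continuousOn,
    tentPath_zero x y v, tentPath_one x y v,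
    fun ⟨t, _, ht⟩ ↦ tentPath_ne_of_mem_openSegment hv hz t ht, ?_⟩
  refine (eVariationOn_tentPath_le x y v).trans_lt ?_
  rw [ENNReal.ofReal_lt_ofReal_iff (by positivity)]
  linarith

end Tent

/-- **Punctured Euclidean space is not geodesically convex.** Let `E = ℝ^m` (`m ≥ 2`),
`x ≠ y`, and `z` a point of the open segment between them. Then (i) every continuous curve
from `x` to `y` avoiding `z` has length strictly greater than `dist x y`; (ii) for every
`ε > 0` there is such a curve of length `< dist x y + ε`; hence the infimum of lengths of
curves from `x` to `y` in `E \ {z}` equals `dist x y` and is not attained. -/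
theorem punctured_euclidean_not_geodesically_convex
    {m : ℕ} (hm : 2 ≤ m) {x y z : EuclideanSpace ℝ (Fin m)} (hxy : x ≠ y)
    (hz : z ∈ openSegment ℝ x y) :
    (∀ γ : ℝ → EuclideanSpace ℝ (Fin m), ContinuousOn γ (Set.Icc 0 1) →
      γ 0 = x → γ 1 = y → z ∉ γ '' Set.Icc 0 1 →
      ENNReal.ofReal (dist x y) < eVariationOn γ (Set.Icc 0 1)) ∧
    (∀ ε : ℝ, 0 < ε → ∃ γ : ℝ → EuclideanSpace ℝ (Fin m),
      ContinuousOn γ (Set.Icc 0 1) ∧ γ 0 = x ∧ γ 1 = y ∧ z ∉ γ '' Set.Icc 0 1 ∧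
      eVariationOn γ (Set.Icc 0 1) < ENNReal.ofReal (dist x y + ε)) ∧
    sInf {L : ℝ≥0∞ | ∃ γ : ℝ → EuclideanSpace ℝ (Fin m),
        ContinuousOn γ (Set.Icc 0 1) ∧ γ 0 = x ∧ γ 1 = y ∧ z ∉ γ '' Set.Icc 0 1 ∧
        L = eVariationOn γ (Set.Icc 0 1)}
      = ENNReal.ofReal (dist x y) := by
  have lower : ∀ γ : ℝ → EuclideanSpace ℝ (Fin m), ContinuousOn γ (Icc 0 1) → γ 0 = x →
      γ 1 = y → z ∉ γ '' Icc 0 1 → ENNReal.ofReal (dist x y) < eVariationOn γ (Icc 0 1) := by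
    rintro γ hγ rfl rfl hzγ
    rw [← edist_dist]
    exact edist_lt_eVariationOn_of_mem_segment_of_notMem_image zero_le_one hγ
      (openSegment_subset_segment ℝ _ _ hz) hzγ
  have upper := fun ε (hε : (0 : ℝ) < ε) ↦ exists_eVariationOn_lt_of_mem_openSegment
    (by rwa [finrank_euclideanSpace_fin]) hxy hz hε
  refine ⟨lower, upper, le_antisymm ?_ (le_sInf ?_)⟩
  · refine ENNReal.le_of_forall_pos_le_add fun ε hε _ ↦ ?_
    obtain ⟨γ, hγ, h0, h1, hzγ, hlen⟩ := upper ε hε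
    refine (sInf_le ?_).trans (hlen.le.trans_eq ?_)
    · exact ⟨γ, hγ, h0, h1, hzγ, rfl⟩
    · rw [ENNReal.ofReal_add dist_nonneg ε.coe_nonneg, ENNReal.ofReal_coe_nnreal]
  · rintro _ ⟨γ, hγ, h0, h1, hzγ, rfl⟩
    exact (lower γ hγ h0 h1 hzγ).le
end

section
/- Let M₃ := {(t, y₁, y₂) ∈ ℝ³ : (y₁, y₂) ≠ (0,0)} (three-dimensional Minkowski spacetime with a timelike line removed). With p := (0, −1, 0) and q := (2, 1, 0): (i) it is NOT the case that p ≤ q; yet (ii) for every ε > 0 one has p ≤ (2+ε, 1, 0). Since (2+1/k, 1, 0) → q as k → ∞, the causal relation ≤ on M₃ is not a closed subset of M₃ × M₃. -/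
open Set

/-- Three-dimensional Minkowski spacetime with the timelike line `y₁ = y₂ = 0` removed. -/
def M₃ : Set (ℝ × ℝ × ℝ) := {v | (v.2.1, v.2.2) ≠ ((0 : ℝ), (0 : ℝ))}

/-- The causal relation of `M₃ ⊆ ℝ³` as a region of three-dimensional Minkowski spacetime:
`p ≤ q` iff some continuous curve in `M₃` from `p` to `q` has all its increments in the
closed future cone `{v : v.1 ≥ √(v.2² + v.3²)}`. -/
def CausalM₃ (p q : ℝ × ℝ × ℝ) : Prop :=
  ∃ γ : ℝ → ℝ × ℝ × ℝ, ContinuousOn γ (Set.Icc 0 1) ∧ γ '' Set.Icc 0 1 ⊆ M₃ ∧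
    γ 0 = p ∧ γ 1 = q ∧
    ∀ s s' : ℝ, 0 ≤ s → s ≤ s' → s' ≤ 1 →
      Real.sqrt ((γ s' - γ s).2.1 ^ 2 + (γ s' - γ s).2.2 ^ 2) ≤ (γ s' - γ s).1

/-!
Since `(2,1,0) - (0,-1,0)` is null, every intermediate point of a causal curve from `p` to `q`
must lie on the straight segment `pq`, and that segment meets the removed axis at `y₁ = 0`.
Giving up a little time, `ε > 0`, lets the curve bend out to `y₂ = ε/2` and pass the axis.
-/

open Filter Topology

lemma mem_M₃ {v : ℝ × ℝ × ℝ} : v ∈ M₃ ↔ v.2.1 ≠ 0 ∨ v.2.2 ≠ 0 := by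
  simp only [M₃, mem_ofPred_eq, ne_eq, Prod.ext_iff, not_and_or]

def futureCone : Set (ℝ × ℝ × ℝ) := {v | √(v.2.1 ^ 2 + v.2.2 ^ 2) ≤ v.1}

lemma sqrt_sq_add_sq_le_of_abs_le {a b α β : ℝ} (ha : |a| ≤ α) (hb : |b| ≤ β) :
    √(a ^ 2 + b ^ 2) ≤ α + β := by
  have hα : 0 ≤ α := (abs_nonneg a).trans ha
  have hβ : 0 ≤ β := (abs_nonneg b).trans hb
  rw [Real.sqrt_le_iff]
  refine ⟨add_nonneg hα hβ, ?_⟩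
  nlinarith [sq_abs a, sq_abs b, abs_nonneg a, abs_nonneg b, mul_nonneg hα hβ]

lemma CausalM₃.exists_mem_of_snd_fst_mem_Icc {p q : ℝ × ℝ × ℝ} (h : CausalM₃ p q) {c : ℝ}
    (hc : c ∈ Icc p.2.1 q.2.1) :
    ∃ r ∈ M₃, r.2.1 = c ∧ r - p ∈ futureCone ∧ q - r ∈ futureCone := by
  obtain ⟨γ, hγ, hγM, rfl, rfl, hγcone⟩ := h
  obtain ⟨s, hs, rfl⟩ := intermediate_value_Icc zero_le_one
    ((continuous_fst.comp continuous_snd).comp_continuousOn hγ) hc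
  exact ⟨γ s, hγM (mem_image_of_mem γ hs), rfl, hγcone 0 s le_rfl hs.1 hs.2,
    hγcone s 1 hs.1 hs.2 le_rfl⟩

lemma not_causalM₃_around_axis : ¬ CausalM₃ (0, -1, 0) (2, 1, 0) := by
  intro h
  obtain ⟨r, hrM, hr, hpr, hrq⟩ :=
    h.exists_mem_of_snd_fst_mem_Icc (c := 0) ⟨by norm_num, by norm_num⟩
  have hy : r.2.2 ≠ 0 := by simpa [mem_M₃, hr] using hrM
  have hsqrt : 1 < √(1 + r.2.2 ^ 2) := by
    rw [Real.lt_sqrt zero_le_one]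
    nlinarith [sq_pos_of_ne_zero hy]
  simp only [futureCone, mem_ofPred_eq, Prod.fst_sub, Prod.snd_sub, hr] at hpr hrq
  norm_num at hpr hrq
  linarith

/-- The curve is the broken line through `(1 + ε/2, 0, ε/2)`. -/
lemma causalM₃_around_axis_of_pos {ε : ℝ} (hε : 0 < ε) : CausalM₃ (0, -1, 0) (2 + ε, 1, 0) := by
  refine ⟨fun s => ((2 + ε) * s, 2 * s - 1, ε / 2 * (1 - |2 * s - 1|)),
    by fun_prop, ?_, by norm_num, by norm_num, ?_⟩
  · rintro _ ⟨s, -, rfl⟩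
    rw [mem_M₃]
    by_cases hs : 2 * s - 1 = 0
    · right
      simp [hs, hε.ne']
    · exact Or.inl hs
  · intro s s' _ hss' _
    simp only [Prod.fst_sub, Prod.snd_sub]
    have h₁ : |2 * s' - 1 - (2 * s - 1)| ≤ 2 * (s' - s) :=
      abs_le.2 ⟨by linarith, by linarith⟩
    have h₂ : |ε / 2 * (1 - |2 * s' - 1|) - ε / 2 * (1 - |2 * s - 1|)| ≤ ε * (s' - s) := by
      have := abs_abs_sub_abs_le_abs_sub (2 * s - 1) (2 * s' - 1)
      rw [← mul_sub, abs_mul, abs_of_pos (half_pos hε),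
        show 1 - |2 * s' - 1| - (1 - |2 * s - 1|) = |2 * s - 1| - |2 * s' - 1| by ring]
      rw [abs_sub_comm (2 * s - 1), show 2 * s' - 1 - (2 * s - 1) = 2 * (s' - s) by ring,
        abs_of_nonneg (by linarith : 0 ≤ 2 * (s' - s))] at this
      nlinarith
    calc _ ≤ 2 * (s' - s) + ε * (s' - s) := sqrt_sq_add_sq_le_of_abs_le h₁ h₂
      _ = (2 + ε) * s' - (2 + ε) * s := by ring

/-- **The causal relation on `M₃` is not closed.** With `p = (0,-1,0)` and `q = (2,1,0)`:
(i) `p ≤ q` fails; (ii) `p ≤ (2+ε,1,0)` holds for every `ε > 0`; consequently the causal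
relation is not a closed subset of `M₃ × M₃`. -/
theorem causal_relation_M₃_not_closed :
    ¬ CausalM₃ (0, -1, 0) (2, 1, 0) ∧
    (∀ ε : ℝ, 0 < ε → CausalM₃ (0, -1, 0) (2 + ε, 1, 0)) ∧
    ¬ IsClosed {x : M₃ × M₃ | CausalM₃ x.1.val x.2.val} := by
  refine ⟨not_causalM₃_around_axis, fun _ => causalM₃_around_axis_of_pos, fun hclosed => ?_⟩
  have hM : ∀ ε : ℝ, ((2 + ε, 1, 0) : ℝ × ℝ × ℝ) ∈ M₃ := fun ε => mem_M₃.2 (Or.inl one_ne_zero)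
  let pair : ℝ → M₃ × M₃ := fun ε => (⟨(0, -1, 0), mem_M₃.2 (Or.inl (by norm_num))⟩, ⟨_, hM ε⟩)
  have hpair : Continuous pair := by fun_prop
  have hlim : Tendsto pair (𝓝[>] 0) (𝓝 (pair 0)) :=
    tendsto_nhdsWithin_of_tendsto_nhds (hpair.tendsto 0)
  refine not_causalM₃_around_axis ?_
  have := hclosed.mem_of_tendsto hlim
    (eventually_nhdsWithin_of_forall fun ε hε => causalM₃_around_axis_of_pos hε)
  simpa [pair] using this
end
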